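/- Let G = (N, P, S) be an SL-HR grammar and A ∈ N. Let G' be the grammar obtained from G by replacing every A-labeled edge occurring in S and in the right-hand sides of the other rules by rhs(A) (i.e., applying the rule for A to each such edge) and then removing A together with its rule. Then G' is an SL-HR grammar with val(G') isomorphic to val(G), and |G'| = |G| + con(A), where con(A) = ref(A)·(|rhs(A)| − |handle(A)|) − |rhs(A)|. -/

import Mathlib

open scoped Classical

/-- A hypergraph over a label type `L`: nodes and edges are natural-number
identifiers, `att` gives the attachment sequence of an edge, `lab` its label,
and `ext` is the sequence of external nodes. -/
structure HRHypergraph (L : Type) where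
  V : Finset ℕ
  E : Finset ℕ
  att : ℕ → List ℕ
  lab : ℕ → L
  ext : List ℕ

namespace HRHypergraph

variable {L : Type}

/-- Well-formedness of a hypergraph over a ranked alphabet `rk`:
nodes nonempty, attachments are nonempty repetition-free sequences of nodes
whose length is the rank of the label, and the external nodes form a
repetition-free sequence of nodes. -/
def WF (rk : L → ℕ) (g : HRHypergraph L) : Prop :=
  g.V.Nonempty ∧
    (∀ e ∈ g.E, (∀ v ∈ g.att e, v ∈ g.V) ∧ (g.att e).Nodup ∧
      (g.att e).length = rk (g.lab e) ∧ g.att e ≠ []) ∧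
    (∀ v ∈ g.ext, v ∈ g.V) ∧ g.ext.Nodup

/-- The edge size `|g|_E`: simple edges (rank ≤ 2) count 1, a hyperedge of
rank `n > 2` counts `n`. -/
def esize (g : HRHypergraph L) : ℕ :=
  ∑ e ∈ g.E, (if (g.att e).length ≤ 2 then 1 else (g.att e).length)

/-- The size `|g| = |g|_V + |g|_E`. -/
def size (g : HRHypergraph L) : ℕ := g.V.card + g.esize

/-- Isomorphism of hypergraphs: bijections on nodes and edges preserving
attachment, labels and external nodes. -/
def Isomorphic (g h : HRHypergraph L) : Prop :=
  ∃ f fe : ℕ → ℕ,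
    Set.BijOn f ↑g.V ↑h.V ∧ Set.BijOn fe ↑g.E ↑h.E ∧
    (∀ e ∈ g.E, h.att (fe e) = (g.att e).map f) ∧
    (∀ e ∈ g.E, h.lab (fe e) = g.lab e) ∧
    h.ext = g.ext.map f

end HRHypergraph

/-- `IsReplacement g e₀ h g'` holds if `g'` is (a realization of) the
replacement `g[e₀/h]`: the edge `e₀` is removed from `g`, a disjoint copy of
`h` (renamed via `ρ` on nodes and `η` on edges) is adjoined, and the i-th
external node of `h` is identified with the i-th attachment node of `e₀`. -/
def IsReplacement {L : Type} (g : HRHypergraph L) (e₀ : ℕ) (h : HRHypergraph L)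
    (g' : HRHypergraph L) : Prop :=
  ∃ ρ η : ℕ → ℕ,
    Set.InjOn ρ ↑h.V ∧ Set.InjOn η ↑h.E ∧
    (∀ v ∈ h.V, v ∉ h.ext → ρ v ∉ g.V) ∧
    h.ext.map ρ = g.att e₀ ∧
    (∀ e ∈ h.E, η e ∉ g.E) ∧
    g'.V = g.V ∪ h.V.image ρ ∧
    g'.E = g.E.erase e₀ ∪ h.E.image η ∧
    (∀ e ∈ g.E.erase e₀, g'.att e = g.att e ∧ g'.lab e = g.lab e) ∧
    (∀ e ∈ h.E, g'.att (η e) = (h.att e).map ρ ∧ g'.lab (η e) = h.lab e) ∧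
    g'.ext = g.ext

/-- An HR grammar over a terminal alphabet `T`: nonterminals are natural
numbers (`NT`), `rkN` gives their ranks, `rhs` the unique right-hand side of
each nonterminal, and `S` is the start graph.  Labels of graphs occurring in
the grammar are `T ⊕ ℕ` (terminals on the left, nonterminals on the right). -/
structure HRGrammar (T : Type) where
  NT : Finset ℕ
  rkN : ℕ → ℕ
  rhs : ℕ → HRHypergraph (T ⊕ ℕ)
  S : HRHypergraph (T ⊕ ℕ)

namespace HRGrammar

variable {T : Type}

/-- The rank function on labels `T ⊕ ℕ` induced by terminal ranks `rkT`. -/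
def rk (G : HRGrammar T) (rkT : T → ℕ) : T ⊕ ℕ → ℕ := Sum.elim rkT G.rkN

/-- Well-formedness of an HR grammar over ranked alphabet `rkT`:
all ranks are ≥ 1, the start graph and all right-hand sides are well-formed,
`rank(A) = rank(rhs A)` for all nonterminals, and all nonterminal labels
occurring in the grammar are declared nonterminals. -/
def WF (G : HRGrammar T) (rkT : T → ℕ) : Prop :=
  (∀ a : T, 1 ≤ rkT a) ∧ (∀ A ∈ G.NT, 1 ≤ G.rkN A) ∧
    G.S.WF (G.rk rkT) ∧
    (∀ A ∈ G.NT, (G.rhs A).WF (G.rk rkT) ∧ (G.rhs A).ext.length = G.rkN A) ∧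
    (∀ e ∈ G.S.E, ∀ B : ℕ, G.S.lab e = Sum.inr B → B ∈ G.NT) ∧
    (∀ A ∈ G.NT, ∀ e ∈ (G.rhs A).E, ∀ B : ℕ, (G.rhs A).lab e = Sum.inr B → B ∈ G.NT)

/-- The dependency relation: `dep G A B` iff a `B`-labeled edge occurs in
`rhs(A)`. -/
def dep (G : HRGrammar T) (A B : ℕ) : Prop :=
  A ∈ G.NT ∧ B ∈ G.NT ∧ ∃ e ∈ (G.rhs A).E, (G.rhs A).lab e = Sum.inr B

/-- Straight-line condition: the dependency relation is acyclic, and every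
nonterminal occurs in some derivation from the start graph (i.e., it is
reachable, via dependencies, from a nonterminal occurring in `S`).  (Every
nonterminal has exactly one rule by construction, since `rhs` is a
function.) -/
def SL (G : HRGrammar T) : Prop :=
  (∀ A : ℕ, ¬ Relation.TransGen G.dep A A) ∧
    (∀ A ∈ G.NT, ∃ B : ℕ, (∃ e ∈ G.S.E, G.S.lab e = Sum.inr B) ∧
      Relation.ReflTransGen G.dep B A)

/-- One derivation step: replace some nonterminal edge by its right-hand
side. -/
def Derive (G : HRGrammar T) (g g' : HRHypergraph (T ⊕ ℕ)) : Prop :=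
  ∃ e ∈ g.E, ∃ A ∈ G.NT, g.lab e = Sum.inr A ∧ IsReplacement g e (G.rhs A) g'

/-- A graph is terminal if all its edge labels are terminal symbols. -/
def Terminal (g : HRHypergraph (T ⊕ ℕ)) : Prop :=
  ∀ e ∈ g.E, ∃ a : T, g.lab e = Sum.inl a

/-- The language of the grammar: all terminal graphs derivable from `S`. -/
def Lang (G : HRGrammar T) : Set (HRHypergraph (T ⊕ ℕ)) :=
  { g | Relation.ReflTransGen G.Derive G.S g ∧ Terminal g }

/-- The size `|G| = |S| + Σ_{(A,g) ∈ P} |g|`. -/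
def size (G : HRGrammar T) : ℕ :=
  G.S.size + ∑ A ∈ G.NT, (G.rhs A).size

end HRGrammar

namespace HRGrammar

variable {T : Type}

/-- `ref(A)`: the total number of `A`-labeled edges occurring in the start
graph and in the right-hand sides of the rules of `G`. -/
noncomputable def refCount (G : HRGrammar T) (A : ℕ) : ℕ :=
  (G.S.E.filter fun e => G.S.lab e = Sum.inr A).card +
    ∑ B ∈ G.NT, ((G.rhs B).E.filter fun e => (G.rhs B).lab e = Sum.inr A).card

/-- `|handle(A)|`: the size of the graph consisting of `rank(A)` external
nodes and a single `A`-edge attached to all of them. -/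
def handleSize (G : HRGrammar T) (A : ℕ) : ℕ :=
  if G.rkN A ≤ 2 then G.rkN A + 1 else 2 * G.rkN A

/-- The contribution of `A`:
`con(A) = ref(A)·(|rhs(A)| − |handle(A)|) − |rhs(A)|`. -/
noncomputable def con (G : HRGrammar T) (A : ℕ) : ℤ :=
  (G.refCount A : ℤ) * (((G.rhs A).size : ℤ) - G.handleSize A) - (G.rhs A).size

/-- One step of eliminating the nonterminal `A` from a graph: apply the rule
`A → rhs(A)` to some `A`-labeled edge. -/
def ElimStep (G : HRGrammar T) (A : ℕ) (x y : HRHypergraph (T ⊕ ℕ)) : Prop :=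
  ∃ e ∈ x.E, x.lab e = Sum.inr A ∧ IsReplacement x e (G.rhs A) y

/-- `ElimAll G A x y`: `y` is obtained from `x` by applying the rule for `A`
to every `A`-labeled edge (so that no `A`-labeled edge remains). -/
def ElimAll (G : HRGrammar T) (A : ℕ) (x y : HRHypergraph (T ⊕ ℕ)) : Prop :=
  Relation.ReflTransGen (G.ElimStep A) x y ∧ ∀ e ∈ y.E, y.lab e ≠ Sum.inr A

end HRGrammar

/-!
Eliminating `A` applies the rule of `A` once to each of the `ref(A)` edges labelled `A` (there
is none in `rhs(A)`, by acyclicity). Such a step removes an edge of size `|handle(A)| - rank(A)`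
and adds `|rhs(A)| - rank(A)`, since the external nodes of `rhs(A)` are glued onto existing
nodes; deleting the rule of `A` removes another `|rhs(A)|`. This gives the size formula.

A derivation step of `G'` is simulated in `G` by the corresponding step followed by the
eliminations inside the inserted right-hand side, because replacement is associative. Derivations
of `G` terminate (each step lowers a weight in which a `B`-edge outweighs all of `rhs(B)`) and
are locally confluent up to isomorphism (replacements of distinct edges commute), so by Newman's
lemma all terminal graphs derived from the start graph are isomorphic. Well-formedness and the
straight-line conditions pass to `G'`, whose dependency relation is that of `G` with `A`
bypassed.
-/

open Set Function Relation

theorem Set.BijOn.union_of_disjoint {α β : Type*} {f : α → β} {s₁ s₂ : Set α} {t₁ t₂ : Set β}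
    (h₁ : BijOn f s₁ t₁) (h₂ : BijOn f s₂ t₂) (ht : Disjoint t₁ t₂) :
    BijOn f (s₁ ∪ s₂) (t₁ ∪ t₂) := by
  refine h₁.union h₂ ?_
  rintro x (hx | hx) y (hy | hy) hxy
  · exact h₁.injOn hx hy hxy
  · exact (ht.ne_of_mem (h₁.mapsTo hx) (h₂.mapsTo hy) hxy).elim
  · exact (ht.ne_of_mem (h₁.mapsTo hy) (h₂.mapsTo hx) hxy.symm).elim
  · exact h₂.injOn hx hy hxy

theorem Set.bijOn_image_of_eqOn_comp {α β γ : Type*} {ρ : α → β} {ρ' : α → γ} {F : β → γ}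
    {s : Set α} (hρ : InjOn ρ s) (hρ' : InjOn ρ' s) (hF : EqOn (F ∘ ρ) ρ' s) :
    BijOn F (ρ '' s) (ρ' '' s) :=
  (bijOn_comp_iff hρ).1 (hρ'.bijOn_image.congr hF.symm)

theorem Relation.ReflTransGen.of_bypass {α : Type*} {r r' : α → α → Prop} {a : α}
    (hr : ∀ b c, b ≠ a → c ≠ a → r b c → r' b c)
    (hbypass : ∀ b c, b ≠ a → c ≠ a → r b a → r a c → r' b c) (hloop : ¬ r a a) {b c : α}
    (h : ReflTransGen r b c) (hc : c ≠ a) :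
    (b ≠ a → ReflTransGen r' b c) ∧ (b = a → ∃ d, r a d ∧ ReflTransGen r' d c) := by
  induction h using Relation.ReflTransGen.head_induction_on with
  | refl => exact ⟨fun _ => .refl, fun h => (hc h).elim⟩
  | @head b d hbd _ ih =>
    have hd_ne : b = a → d ≠ a := fun hb hd => hloop (by rwa [hb, hd] at hbd)
    refine ⟨fun hb => ?_, fun hb => ⟨d, hb ▸ hbd, ih.1 (hd_ne hb)⟩⟩
    by_cases hd : d = a
    · obtain ⟨d', had', hd'c⟩ := ih.2 hd
      exact .head (hbypass b d' hb (fun h => hloop (h ▸ had')) (hd ▸ hbd) had') hd'c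
    · exact .head (hr b d hb hd hbd) (ih.1 hd)

namespace HRHypergraph

variable {L : Type}

def WellAttached (g : HRHypergraph L) : Prop :=
  (∀ e ∈ g.E, (∀ v ∈ g.att e, v ∈ g.V) ∧ (g.att e).Nodup) ∧ (∀ v ∈ g.ext, v ∈ g.V) ∧ g.ext.Nodup

theorem WF.wellAttached {rk : L → ℕ} {g : HRHypergraph L} (h : g.WF rk) : g.WellAttached :=
  ⟨fun e he => ⟨(h.2.1 e he).1, (h.2.1 e he).2.1⟩, h.2.2⟩

theorem WF.of_rk_eq {rk rk' : L → ℕ} {g : HRHypergraph L} (hg : g.WF rk)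
    (h : ∀ e ∈ g.E, rk' (g.lab e) = rk (g.lab e)) : g.WF rk' :=
  ⟨hg.1, fun e he =>
    let ⟨h₁, h₂, h₃, h₄⟩ := hg.2.1 e he
    ⟨h₁, h₂, h₃.trans (h e he).symm, h₄⟩, hg.2.2⟩

def HasLabel (g : HRHypergraph L) (ℓ : L) : Prop := ∃ e ∈ g.E, g.lab e = ℓ

noncomputable def labelCount (g : HRHypergraph L) (ℓ : L) : ℕ :=
  (g.E.filter fun e => g.lab e = ℓ).card

theorem labelCount_eq_zero {g : HRHypergraph L} {ℓ : L} :
    g.labelCount ℓ = 0 ↔ ¬ g.HasLabel ℓ := by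
  simp [labelCount, HasLabel, Finset.filter_eq_empty_iff]

structure IsoVia (g h : HRHypergraph L) (f fe : ℕ → ℕ) : Prop where
  bijOn_V : BijOn f ↑g.V ↑h.V
  bijOn_E : BijOn fe ↑g.E ↑h.E
  att : ∀ e ∈ g.E, h.att (fe e) = (g.att e).map f
  lab : ∀ e ∈ g.E, h.lab (fe e) = g.lab e
  ext : h.ext = g.ext.map f

theorem isomorphic_iff {g h : HRHypergraph L} : g.Isomorphic h ↔ ∃ f fe, IsoVia g h f fe :=
  ⟨fun ⟨f, fe, hV, hE, ha, hl, hx⟩ => ⟨f, fe, hV, hE, ha, hl, hx⟩,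
    fun ⟨f, fe, hV, hE, ha, hl, hx⟩ => ⟨f, fe, hV, hE, ha, hl, hx⟩⟩

theorem IsoVia.id (g : HRHypergraph L) : IsoVia g g id id :=
  ⟨bijOn_id _, bijOn_id _, by simp, by simp, by simp⟩

theorem IsoVia.wellAttached {g h : HRHypergraph L} {f fe : ℕ → ℕ} (I : IsoVia g h f fe)
    (hg : g.WellAttached) : h.WellAttached := by
  have hmap : ∀ l : List ℕ, (∀ v ∈ l, v ∈ g.V) → l.Nodup →
      (∀ v ∈ l.map f, v ∈ h.V) ∧ (l.map f).Nodup := fun l hl hnd =>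
    ⟨fun v hv => by
      obtain ⟨u, hu, rfl⟩ := List.mem_map.1 hv
      exact I.bijOn_V.mapsTo (hl u hu),
    hnd.map_on fun u hu u' hu' => I.bijOn_V.injOn (hl u hu) (hl u' hu')⟩
  refine ⟨fun x hx => ?_, I.ext ▸ hmap _ hg.2.1 hg.2.2⟩
  obtain ⟨e, he, rfl⟩ := I.bijOn_E.surjOn hx
  exact I.att e he ▸ hmap _ (hg.1 e he).1 (hg.1 e he).2

namespace Isomorphic

variable {g h k : HRHypergraph L}

theorem refl (g : HRHypergraph L) : g.Isomorphic g :=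
  isomorphic_iff.2 ⟨id, id, IsoVia.id g⟩

theorem trans (h₁ : g.Isomorphic h) (h₂ : h.Isomorphic k) : g.Isomorphic k := by
  obtain ⟨f₁, fe₁, I₁⟩ := isomorphic_iff.1 h₁
  obtain ⟨f₂, fe₂, I₂⟩ := isomorphic_iff.1 h₂
  refine isomorphic_iff.2 ⟨f₂ ∘ f₁, fe₂ ∘ fe₁, I₂.bijOn_V.comp I₁.bijOn_V,
    I₂.bijOn_E.comp I₁.bijOn_E, fun e he => ?_, fun e he => ?_,
    by rw [I₂.ext, I₁.ext, List.map_map]⟩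
  · rw [comp_apply, I₂.att _ (I₁.bijOn_E.mapsTo he), I₁.att e he, List.map_map]
  · rw [comp_apply, I₂.lab _ (I₁.bijOn_E.mapsTo he), I₁.lab e he]

theorem symm (hg : g.WellAttached) (hgh : g.Isomorphic h) : h.Isomorphic g := by
  obtain ⟨f, fe, I⟩ := isomorphic_iff.1 hgh
  have hf := I.bijOn_V.injOn.leftInvOn_invFunOn
  have hfe := I.bijOn_E.injOn.leftInvOn_invFunOn
  have map_inv : ∀ l : List ℕ, (∀ v ∈ l, v ∈ g.V) → (l.map f).map (invFunOn f g.V) = l :=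
    fun l hl => by
      rw [List.map_map]
      exact (List.map_congr_left (g := id) fun v hv => hf (hl v hv)).trans (List.map_id l)
  refine isomorphic_iff.2 ⟨invFunOn f g.V, invFunOn fe g.E,
    I.bijOn_V.symm I.bijOn_V.invOn_invFunOn.symm, I.bijOn_E.symm I.bijOn_E.invOn_invFunOn.symm,
    ?_, ?_, by rw [I.ext, map_inv _ hg.2.1]⟩
  all_goals
    intro x hx
    obtain ⟨e, he, rfl⟩ := I.bijOn_E.surjOn hx
  · rw [hfe he, I.att e he, map_inv _ (hg.1 e he).1]
  · rw [hfe he, I.lab e he]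

end Isomorphic

noncomputable def glue (s : Finset ℕ) (f σ : ℕ → ℕ) (t : Finset ℕ) (ρ' : ℕ → ℕ) (v : ℕ) : ℕ :=
  if v ∈ s then f v else ρ' (invFunOn σ t v)

variable {s t : Finset ℕ} {f σ ρ' : ℕ → ℕ}

theorem glue_of_mem {v : ℕ} (hv : v ∈ s) : glue s f σ t ρ' v = f v := if_pos hv

theorem glue_of_notMem {u : ℕ} (hσ : InjOn σ t) (hu : u ∈ t) (hs : σ u ∉ s) :
    glue s f σ t ρ' (σ u) = ρ' u := by
  rw [glue, if_neg hs, hσ.leftInvOn_invFunOn hu]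

end HRHypergraph

open HRHypergraph

section Replacement

variable {L : Type} {g g' g₁ h k x z z₁ h₁ h₂ : HRHypergraph L} {e₀ e d e₁ e₂ M N : ℕ}
  {f fe ρ η σ τ ρ' η' : ℕ → ℕ}

/-- `IsReplacement` with its node and edge renamings `ρ` and `η` fixed. -/
structure IsReplacementVia (g : HRHypergraph L) (e₀ : ℕ) (h g' : HRHypergraph L)
    (ρ η : ℕ → ℕ) : Prop where
  injOn_V : InjOn ρ ↑h.V
  injOn_E : InjOn η ↑h.E
  notMem_V : ∀ v ∈ h.V, v ∉ h.ext → ρ v ∉ g.V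
  map_ext : h.ext.map ρ = g.att e₀
  notMem_E : ∀ e ∈ h.E, η e ∉ g.E
  V_eq : g'.V = g.V ∪ h.V.image ρ
  E_eq : g'.E = g.E.erase e₀ ∪ h.E.image η
  old : ∀ e ∈ g.E.erase e₀, g'.att e = g.att e ∧ g'.lab e = g.lab e
  new : ∀ e ∈ h.E, g'.att (η e) = (h.att e).map ρ ∧ g'.lab (η e) = h.lab e
  ext_eq : g'.ext = g.ext

theorem isReplacement_iff : IsReplacement g e₀ h g' ↔ ∃ ρ η, IsReplacementVia g e₀ h g' ρ η :=
  ⟨fun ⟨ρ, η, a, b, c, d, e, f, i, j, k, l⟩ => ⟨ρ, η, a, b, c, d, e, f, i, j, k, l⟩,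
    fun ⟨ρ, η, a, b, c, d, e, f, i, j, k, l⟩ => ⟨ρ, η, a, b, c, d, e, f, i, j, k, l⟩⟩

namespace IsReplacementVia

variable (R : IsReplacementVia g e₀ h g' ρ η)
include R

theorem V_subset : g.V ⊆ g'.V := R.V_eq ▸ Finset.subset_union_left

theorem mem_V_of_mem {v : ℕ} (hv : v ∈ h.V) : ρ v ∈ g'.V :=
  R.V_eq ▸ Finset.mem_union_right _ (Finset.mem_image_of_mem ρ hv)

theorem erase_subset_E : g.E.erase e₀ ⊆ g'.E := R.E_eq ▸ Finset.subset_union_left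

theorem mem_E_of_mem {d : ℕ} (hd : d ∈ h.E) : η d ∈ g'.E :=
  R.E_eq ▸ Finset.mem_union_right _ (Finset.mem_image_of_mem η hd)

theorem mem_att_of_mem_ext {v : ℕ} (hv : v ∈ h.ext) : ρ v ∈ g.att e₀ :=
  R.map_ext ▸ List.mem_map_of_mem hv

theorem mem_E_cases {x : ℕ} (hx : x ∈ g'.E) : x ∈ g.E.erase e₀ ∨ ∃ d ∈ h.E, η d = x := by
  simpa [R.E_eq] using hx

theorem disjoint_E : Disjoint (g.E.erase e₀) (h.E.image η) :=
  Finset.disjoint_right.2 fun _ hx hx' => by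
    obtain ⟨d, hd, rfl⟩ := Finset.mem_image.1 hx
    exact R.notMem_E d hd (Finset.mem_of_mem_erase hx')

theorem disjoint_V : Disjoint g.V ((h.V.filter (· ∉ h.ext)).image ρ) :=
  Finset.disjoint_right.2 fun _ hw => by
    obtain ⟨v, hv, rfl⟩ := Finset.mem_image.1 hw
    exact R.notMem_V v (Finset.mem_filter.1 hv).1 (Finset.mem_filter.1 hv).2

theorem V_eq_union_internal (hatt : ∀ v ∈ g.att e₀, v ∈ g.V) :
    g'.V = g.V ∪ (h.V.filter (· ∉ h.ext)).image ρ := by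
  rw [R.V_eq]
  ext w
  simp only [Finset.mem_union, Finset.mem_image, Finset.mem_filter]
  constructor
  · rintro (hw | ⟨v, hv, rfl⟩)
    · exact Or.inl hw
    · by_cases hvx : v ∈ h.ext
      · exact Or.inl (hatt _ (R.mem_att_of_mem_ext hvx))
      · exact Or.inr ⟨v, ⟨hv, hvx⟩, rfl⟩
  · rintro (hw | ⟨v, ⟨hv, -⟩, rfl⟩)
    exacts [Or.inl hw, Or.inr ⟨v, hv, rfl⟩]

theorem wellAttached (hg : g.WellAttached) (hh : h.WellAttached) : g'.WellAttached := by
  refine ⟨fun x hx => ?_, R.ext_eq ▸ fun v hv => R.V_subset (hg.2.1 v hv), R.ext_eq ▸ hg.2.2⟩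
  rcases R.mem_E_cases hx with hx | ⟨d, hd, rfl⟩
  · rw [(R.old x hx).1]
    obtain ⟨hsub, hnd⟩ := hg.1 x (Finset.mem_of_mem_erase hx)
    exact ⟨fun v hv => R.V_subset (hsub v hv), hnd⟩
  · rw [(R.new d hd).1]
    obtain ⟨hsub, hnd⟩ := hh.1 d hd
    refine ⟨fun v hv => ?_, hnd.map_on fun u hu u' hu' => R.injOn_V (hsub u hu) (hsub u' hu')⟩
    obtain ⟨u, hu, rfl⟩ := List.mem_map.1 hv
    exact R.mem_V_of_mem (hsub u hu)

theorem wf {rk : L → ℕ} (hg : g.WF rk) (hh : h.WF rk) : g'.WF rk := by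
  have hok := R.wellAttached hg.wellAttached hh.wellAttached
  refine ⟨hg.1.mono R.V_subset, fun x hx => ⟨(hok.1 x hx).1, (hok.1 x hx).2, ?_⟩, hok.2⟩
  rcases R.mem_E_cases hx with hx | ⟨d, hd, rfl⟩
  · rw [(R.old x hx).1, (R.old x hx).2]
    exact (hg.2.1 x (Finset.mem_of_mem_erase hx)).2.2
  · rw [(R.new d hd).1, (R.new d hd).2, List.length_map, Ne, List.map_eq_nil_iff]
    exact (hh.2.1 d hd).2.2

theorem sum_E {M : Type*} [AddCommMonoid M] (w : ℕ → L → M) :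
    ∑ x ∈ g'.E, w (g'.att x).length (g'.lab x) =
      ∑ x ∈ g.E.erase e₀, w (g.att x).length (g.lab x) +
        ∑ d ∈ h.E, w (h.att d).length (h.lab d) := by
  rw [R.E_eq, Finset.sum_union R.disjoint_E, Finset.sum_image fun a ha b hb => R.injOn_E ha hb]
  congr 1
  · exact Finset.sum_congr rfl fun x hx => by rw [(R.old x hx).1, (R.old x hx).2]
  · exact Finset.sum_congr rfl fun d hd => by rw [(R.new d hd).1, (R.new d hd).2, List.length_map]

theorem card_V_add (hatt : ∀ v ∈ g.att e₀, v ∈ g.V) (hh : ∀ v ∈ h.ext, v ∈ h.V)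
    (hnd : h.ext.Nodup) : g'.V.card + h.ext.length = g.V.card + h.V.card := by
  have hint : ((h.V.filter (· ∉ h.ext)).image ρ).card = (h.V.filter (· ∉ h.ext)).card :=
    Finset.card_image_of_injOn fun a ha b hb => R.injOn_V (Finset.mem_filter.1 ha).1
      (Finset.mem_filter.1 hb).1
  have hext : h.V.filter (· ∈ h.ext) = h.ext.toFinset := by
    ext v
    simpa using fun hv => hh v hv
  have hsplit := Finset.card_filter_add_card_filter_not (s := h.V) (· ∈ h.ext)
  rw [hext, List.toFinset_card_of_nodup hnd] at hsplit
  rw [R.V_eq_union_internal hatt, Finset.card_union_of_disjoint R.disjoint_V, hint]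
  omega

theorem esize_add (he₀ : e₀ ∈ g.E) :
    g'.esize + (if (g.att e₀).length ≤ 2 then 1 else (g.att e₀).length) = g.esize + h.esize := by
  simp only [HRHypergraph.esize]
  rw [R.sum_E fun n _ => if n ≤ 2 then 1 else n, ← Finset.sum_erase_add _ _ he₀]
  ring

theorem labelCount_add (he₀ : e₀ ∈ g.E) (ℓ : L) :
    g'.labelCount ℓ + (if g.lab e₀ = ℓ then 1 else 0) = g.labelCount ℓ + h.labelCount ℓ := by
  simp only [HRHypergraph.labelCount, Finset.card_filter]
  rw [R.sum_E fun _ l => if l = ℓ then 1 else 0, ← Finset.sum_erase_add _ _ he₀]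
  ring

theorem glue_V_apply (hatt : ∀ v ∈ g.att e₀, v ∈ g.V) (hρ' : h.ext.map ρ' = (g.att e₀).map f)
    {v : ℕ} (hv : v ∈ h.V) : glue g.V f ρ h.V ρ' (ρ v) = ρ' v := by
  by_cases hvx : v ∈ h.ext
  · rw [glue_of_mem (hatt _ (R.mem_att_of_mem_ext hvx))]
    rw [← R.map_ext, List.map_map] at hρ'
    exact (List.map_eq_map_iff.1 hρ' v hvx).symm
  · exact glue_of_notMem R.injOn_V hv (R.notMem_V v hv hvx)

theorem glue_E_apply {d : ℕ} (hd : d ∈ h.E) : glue g.E fe η h.E η' (η d) = η' d :=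
  glue_of_notMem R.injOn_E hd (R.notMem_E d hd)

theorem bijOn_glue_V {t : Set ℕ} (hatt : ∀ v ∈ g.att e₀, v ∈ g.V) (hf : BijOn f g.V t)
    (hρ'inj : InjOn ρ' h.V) (hρ' : h.ext.map ρ' = (g.att e₀).map f)
    (hdisj : Disjoint t (ρ' '' ↑(h.V.filter (· ∉ h.ext)))) :
    BijOn (glue g.V f ρ h.V ρ') g'.V (t ∪ ρ' '' ↑(h.V.filter (· ∉ h.ext))) := by
  have hint : ∀ v ∈ h.V.filter (· ∉ h.ext), v ∈ h.V := fun v hv => (Finset.mem_filter.1 hv).1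
  rw [R.V_eq_union_internal hatt, Finset.coe_union, Finset.coe_image]
  exact (hf.congr fun w hw => (glue_of_mem hw).symm).union_of_disjoint
    (bijOn_image_of_eqOn_comp (R.injOn_V.mono hint) (hρ'inj.mono hint)
      fun v hv => R.glue_V_apply hatt hρ' (hint v hv)) hdisj

theorem bijOn_glue_E {t : Set ℕ} (hf : BijOn fe ↑(g.E.erase e₀) t) (hη' : InjOn η' h.E)
    (hdisj : Disjoint t (η' '' h.E)) :
    BijOn (glue g.E fe η h.E η') g'.E (t ∪ η' '' h.E) := by
  rw [R.E_eq, Finset.coe_union, Finset.coe_image]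
  exact (hf.congr fun x hx => (glue_of_mem (Finset.mem_of_mem_erase hx)).symm).union_of_disjoint
    (bijOn_image_of_eqOn_comp R.injOn_E hη' fun d hd => R.glue_E_apply hd) hdisj

end IsReplacementVia

theorem IsReplacementVia.isomorphic (hg : g.WellAttached) (hh : h.WellAttached)
    (I : IsoVia g g₁ f fe) (he₀ : e₀ ∈ g.E) (R : IsReplacementVia g e₀ h z ρ η)
    (R₁ : IsReplacementVia g₁ (fe e₀) h z₁ ρ' η') : z.Isomorphic z₁ := by
  have hatt : ∀ v ∈ g.att e₀, v ∈ g.V := (hg.1 e₀ he₀).1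
  have hatt₁ : ∀ v ∈ g₁.att (fe e₀), v ∈ g₁.V := by
    rw [I.att e₀ he₀]
    rintro _ hv
    obtain ⟨u, hu, rfl⟩ := List.mem_map.1 hv
    exact I.bijOn_V.mapsTo (hatt u hu)
  have hmap : h.ext.map ρ' = (g.att e₀).map f := by rw [R₁.map_ext, I.att e₀ he₀]
  have hold : BijOn fe ↑(g.E.erase e₀) ↑(g₁.E.erase (fe e₀)) := by
    rw [Finset.coe_erase, Finset.coe_erase]
    exact I.bijOn_E.sdiff_singleton he₀
  have hold_map : ∀ x ∈ g.E.erase e₀, fe x ∈ g₁.E.erase (fe e₀) := fun x hx => hold.mapsTo hx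
  have hext : z₁.ext = z.ext.map (glue g.V f ρ h.V ρ') := by
    rw [R₁.ext_eq, R.ext_eq, I.ext]
    exact List.map_congr_left fun u hu => (glue_of_mem (hg.2.1 u hu)).symm
  refine isomorphic_iff.2 ⟨glue g.V f ρ h.V ρ', glue g.E fe η h.E η', ?_, ?_, fun x hx => ?_,
    fun x hx => ?_, hext⟩
  · rw [R₁.V_eq_union_internal hatt₁, Finset.coe_union, Finset.coe_image]
    exact R.bijOn_glue_V hatt I.bijOn_V R₁.injOn_V hmap
      (by rw [← Finset.coe_image]; exact Finset.disjoint_coe.2 R₁.disjoint_V)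
  · rw [R₁.E_eq, Finset.coe_union, Finset.coe_image]
    exact R.bijOn_glue_E hold R₁.injOn_E
      (by rw [← Finset.coe_image]; exact Finset.disjoint_coe.2 R₁.disjoint_E)
  all_goals rcases R.mem_E_cases hx with hx | ⟨d, hd, rfl⟩
  · have hxE := Finset.mem_of_mem_erase hx
    rw [glue_of_mem hxE, (R₁.old _ (hold_map x hx)).1, I.att x hxE, (R.old x hx).1]
    exact List.map_congr_left fun u hu => (glue_of_mem ((hg.1 x hxE).1 u hu)).symm
  · rw [R.glue_E_apply hd, (R₁.new d hd).1, (R.new d hd).1, List.map_map]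
    exact List.map_congr_left fun u hu => (R.glue_V_apply hatt hmap ((hh.1 d hd).1 u hu)).symm
  · have hxE := Finset.mem_of_mem_erase hx
    rw [glue_of_mem hxE, (R₁.old _ (hold_map x hx)).2, I.lab x hxE, (R.old x hx).2]
  · rw [R.glue_E_apply hd, (R₁.new d hd).2, (R.new d hd).2]

theorem IsReplacement.isomorphic (hg : g.WellAttached) (hh : h.WellAttached)
    (I : IsoVia g g₁ f fe) (he₀ : e₀ ∈ g.E) (hz : IsReplacement g e₀ h z)
    (hz₁ : IsReplacement g₁ (fe e₀) h z₁) : z.Isomorphic z₁ := by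
  obtain ⟨ρ, η, R⟩ := isReplacement_iff.1 hz
  obtain ⟨ρ', η', R₁⟩ := isReplacement_iff.1 hz₁
  exact R.isomorphic hg hh I he₀ R₁

theorem IsReplacement.isomorphic_of_isReplacement (hg : g.WellAttached) (hh : h.WellAttached)
    (he₀ : e₀ ∈ g.E) (hz : IsReplacement g e₀ h z) (hz₁ : IsReplacement g e₀ h z₁) :
    z.Isomorphic z₁ :=
  hz.isomorphic hg hh (IsoVia.id g) he₀ hz₁

namespace HRHypergraph

/-- The node renaming of `replace`: external nodes of `h` go to the corresponding attachment
nodes of `e₀`, internal ones are shifted by `N`. -/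
def replaceNode (g : HRHypergraph L) (e₀ : ℕ) (h : HRHypergraph L) (N v : ℕ) : ℕ :=
  if v ∈ h.ext then (g.att e₀).getD (h.ext.idxOf v) 0 else v + N

/-- A concrete `g[e₀/h]`, in which the edges of the copy of `h` are those of `h` shifted by
`N`. -/
def replace (g : HRHypergraph L) (e₀ : ℕ) (h : HRHypergraph L) (N : ℕ) : HRHypergraph L where
  V := g.V ∪ h.V.image (replaceNode g e₀ h N)
  E := g.E.erase e₀ ∪ h.E.image (· + N)
  att x := if x ∈ h.E.image (· + N) then (h.att (x - N)).map (replaceNode g e₀ h N) else g.att x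
  lab x := if x ∈ h.E.image (· + N) then h.lab (x - N) else g.lab x
  ext := g.ext

def FreshShift (g h : HRHypergraph L) (N : ℕ) : Prop :=
  (∀ v ∈ h.V, v + N ∉ g.V) ∧ ∀ d ∈ h.E, d + N ∉ g.E

def Below (g : HRHypergraph L) (b : ℕ) : Prop :=
  (∀ v ∈ g.V, v < b) ∧ ∀ e ∈ g.E, e < b

theorem below_sup (g : HRHypergraph L) : g.Below (g.V.sup id + g.E.sup id + 1) :=
  ⟨fun _ hv => Nat.lt_succ_of_le ((Finset.le_sup (f := id) hv).trans (Nat.le_add_right _ _)),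
    fun _ he => Nat.lt_succ_of_le ((Finset.le_sup (f := id) he).trans (Nat.le_add_left _ _))⟩

theorem Below.freshShift {b : ℕ} (hg : g.Below b) (hb : b ≤ N) : FreshShift g h N :=
  ⟨fun v _ hv => by have := hg.1 _ hv; omega, fun d _ hd => by have := hg.2 _ hd; omega⟩

theorem replaceNode_of_notMem {v : ℕ} (hv : v ∉ h.ext) : replaceNode g e₀ h N v = v + N :=
  if_neg hv

theorem map_ext_replaceNode (hnd : h.ext.Nodup) (hlen : h.ext.length = (g.att e₀).length) :
    h.ext.map (replaceNode g e₀ h N) = g.att e₀ := by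
  rw [List.map_congr_left (f := replaceNode g e₀ h N)
    (g := fun v => (g.att e₀).getD (h.ext.idxOf v) 0) fun v hv => if_pos hv]
  refine List.ext_getElem (by simpa using hlen) fun i h₁ h₂ => ?_
  rw [List.getElem_map, hnd.idxOf_getElem, List.getD_eq_getElem _ 0 h₂]

theorem replace_att_of_notMem {x : ℕ} (hx : x ∉ h.E.image (· + N)) :
    (g.replace e₀ h N).att x = g.att x := if_neg hx

theorem replace_lab_of_notMem {x : ℕ} (hx : x ∉ h.E.image (· + N)) :
    (g.replace e₀ h N).lab x = g.lab x := if_neg hx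

theorem replace_isReplacementVia (hg : g.WellAttached) (hh : h.WellAttached) (he₀ : e₀ ∈ g.E)
    (hlen : h.ext.length = (g.att e₀).length) (hN : FreshShift g h N) :
    IsReplacementVia g e₀ h (g.replace e₀ h N) (replaceNode g e₀ h N) (· + N) := by
  have hmap := map_ext_replaceNode (g := g) (N := N) hh.2.2 hlen
  have hatt : ∀ {v}, v ∈ h.ext → replaceNode g e₀ h N v ∈ g.V := fun hv =>
    (hg.1 e₀ he₀).1 _ (hmap ▸ List.mem_map_of_mem hv)
  refine ⟨fun v₁ h₁ v₂ h₂ heq => ?_, fun _ _ _ _ h => Nat.add_right_cancel h,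
    fun v hv hvx => replaceNode_of_notMem hvx ▸ hN.1 v hv, hmap, hN.2, rfl, rfl,
    fun x hx => ?_, fun d hd => ?_, rfl⟩
  · by_cases e₁ : v₁ ∈ h.ext <;> by_cases e₂ : v₂ ∈ h.ext
    · simp only [replaceNode, if_pos e₁, if_pos e₂] at heq
      rw [List.getD_eq_getElem _ _ (hlen ▸ List.idxOf_lt_length_iff.2 e₁),
        List.getD_eq_getElem _ _ (hlen ▸ List.idxOf_lt_length_iff.2 e₂)] at heq
      exact (List.idxOf_inj e₁).1 ((hg.1 e₀ he₀).2.getElem_inj_iff.1 heq)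
    · exact absurd (heq ▸ hatt e₁) (replaceNode_of_notMem e₂ ▸ hN.1 v₂ h₂)
    · exact absurd (heq ▸ hatt e₂) (replaceNode_of_notMem e₁ ▸ hN.1 v₁ h₁)
    · rw [replaceNode_of_notMem e₁, replaceNode_of_notMem e₂] at heq
      omega
  · have hxE := Finset.mem_of_mem_erase hx
    refine ⟨replace_att_of_notMem fun h' => ?_, replace_lab_of_notMem fun h' => ?_⟩ <;>
    · obtain ⟨d, hd, rfl⟩ := Finset.mem_image.1 h'
      exact hN.2 d hd hxE
  · simp [replace, hd]

theorem replace_comm {N₁ N₂ : ℕ}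
    (he₁ : e₁ ∉ h₂.E.image (· + N₂)) (he₂ : e₂ ∉ h₁.E.image (· + N₁))
    (hdisj : Disjoint (h₁.E.image (· + N₁)) (h₂.E.image (· + N₂))) :
    (g.replace e₁ h₁ N₁).replace e₂ h₂ N₂ = (g.replace e₂ h₂ N₂).replace e₁ h₁ N₁ := by
  have hρ₁ : replaceNode (g.replace e₂ h₂ N₂) e₁ h₁ N₁ = replaceNode g e₁ h₁ N₁ := by
    funext v; simp only [replaceNode, replace_att_of_notMem he₁]
  have hρ₂ : replaceNode (g.replace e₁ h₁ N₁) e₂ h₂ N₂ = replaceNode g e₂ h₂ N₂ := by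
    funext v; simp only [replaceNode, replace_att_of_notMem he₂]
  have hx : ∀ x, ¬(x ∈ h₁.E.image (· + N₁) ∧ x ∈ h₂.E.image (· + N₂)) := fun x hx =>
    Finset.disjoint_left.1 hdisj hx.1 hx.2
  simp only [replace] at hρ₁ hρ₂ ⊢
  simp only [hρ₁, hρ₂, HRHypergraph.mk.injEq]
  refine ⟨Finset.union_right_comm _ _ _, ?_, ?_, ?_, trivial⟩
  · rw [Finset.erase_union_distrib, Finset.erase_union_distrib, Finset.erase_eq_of_notMem he₁,
      Finset.erase_eq_of_notMem he₂, Finset.erase_right_comm, Finset.union_right_comm]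
  · funext x
    specialize hx x
    split_ifs <;> tauto
  · funext x
    specialize hx x
    split_ifs <;> tauto

end HRHypergraph

theorem IsReplacementVia.freshShift (R : IsReplacementVia g e₀ h g' ρ η)
    (hatt : ∀ v ∈ g.att e₀, v ∈ g.V) (hk : FreshShift g k M)
    (hV : ∀ v ∈ k.V, ∀ u ∈ h.V, u ∉ h.ext → v + M ≠ ρ u)
    (hE : ∀ c ∈ k.E, ∀ d ∈ h.E, c + M ≠ η d) : FreshShift g' k M := by
  refine ⟨fun v hv hmem => ?_, fun c hc hmem => ?_⟩
  · rw [R.V_eq_union_internal hatt, Finset.mem_union, Finset.mem_image] at hmem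
    rcases hmem with hmem | ⟨u, hu, hvu⟩
    · exact hk.1 v hv hmem
    · exact hV v hv u (Finset.mem_filter.1 hu).1 (Finset.mem_filter.1 hu).2 hvu.symm
  · rcases R.mem_E_cases hmem with hmem | ⟨d, hd, hcd⟩
    · exact hk.2 c hc (Finset.mem_of_mem_erase hmem)
    · exact hE c hc d hd hcd.symm

theorem IsReplacementVia.image_erase (R : IsReplacementVia x e h z ρ η) (hd : d ∈ h.E) :
    (h.E.erase d).image η = (h.E.image η).erase (η d) := by
  rw [← Finset.sdiff_singleton_eq_erase, ← Finset.sdiff_singleton_eq_erase,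
    Finset.image_sdiff_of_injOn R.injOn_E (Finset.singleton_subset_iff.2 hd),
    Finset.image_singleton]

theorem IsReplacementVia.comp_injOn_V (hh : h.WellAttached) (hd : d ∈ h.E)
    (R : IsReplacementVia x e h z ρ η) (S : IsReplacementVia h d k h₁ σ τ)
    (T : IsReplacementVia z (η d) k z₁ ρ' η') : InjOn (glue h.V ρ σ k.V ρ') h₁.V := by
  refine (S.bijOn_glue_V (hh.1 d hd).1 R.injOn_V.bijOn_image T.injOn_V
    (T.map_ext.trans (R.new d hd).1) (Set.disjoint_left.2 ?_)).injOn
  rintro _ ⟨v, hv, rfl⟩ ⟨u, hu, hvu⟩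
  exact T.notMem_V u (Finset.mem_filter.1 hu).1 (Finset.mem_filter.1 hu).2
    (hvu ▸ R.mem_V_of_mem hv)

theorem IsReplacementVia.comp_injOn_E (R : IsReplacementVia x e h z ρ η)
    (S : IsReplacementVia h d k h₁ σ τ) (T : IsReplacementVia z (η d) k z₁ ρ' η') :
    InjOn (glue h.E η τ k.E η') h₁.E := by
  refine (S.bijOn_glue_E (R.injOn_E.mono (Finset.erase_subset d h.E)).bijOn_image T.injOn_E
    (Set.disjoint_left.2 ?_)).injOn
  rintro _ ⟨c, hc, rfl⟩ ⟨c', hc', hcc⟩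
  exact T.notMem_E c' hc' (hcc ▸ R.mem_E_of_mem (Finset.mem_of_mem_erase hc))

/-- Replacement is associative: if `z = x[e/h]` and `h₁ = h[d/k]`, then replacing the copy of `d`
in `z` by `k` gives `x[e/h₁]`, provided the new edges avoid the edges of `x` (in particular
`e`, which is no longer in `z`). -/
theorem IsReplacementVia.comp (hh : h.WellAttached) (hk : k.WellAttached) (hd : d ∈ h.E)
    (R : IsReplacementVia x e h z ρ η) (S : IsReplacementVia h d k h₁ σ τ)
    (T : IsReplacementVia z (η d) k z₁ ρ' η') (hfresh : ∀ c ∈ k.E, η' c ∉ x.E) :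
    IsReplacementVia x e h₁ z₁ (glue h.V ρ σ k.V ρ') (glue h.E η τ k.E η') := by
  set P := glue h.V ρ σ k.V ρ'
  set Q := glue h.E η τ k.E η'
  have hatt : ∀ v ∈ h.att d, v ∈ h.V := (hh.1 d hd).1
  have hmap : k.ext.map ρ' = (h.att d).map ρ := T.map_ext.trans (R.new d hd).1
  have hP_old : EqOn P ρ h.V := fun v hv => glue_of_mem hv
  have hQ_old : EqOn Q η h.E := fun c hc => glue_of_mem hc
  have hP_new : ∀ u ∈ k.V, P (σ u) = ρ' u := fun u hu => S.glue_V_apply hatt hmap hu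
  have hQ_new : ∀ c ∈ k.E, Q (τ c) = η' c := fun c hc => S.glue_E_apply hc
  have hd_notMem : η d ∉ x.E := R.notMem_E d hd
  refine ⟨R.comp_injOn_V hh hd S T, R.comp_injOn_E S T, fun v hv hvx => ?_, ?_, fun c hc => ?_, ?_,
    ?_, fun e' he' => ?_, fun c hc => ?_, T.ext_eq.trans R.ext_eq⟩
  · rw [S.ext_eq] at hvx
    rcases Finset.mem_union.1 (S.V_eq_union_internal (hh.1 d hd).1 ▸ hv) with hv | hv
    · rw [hP_old hv]
      exact R.notMem_V v hv hvx
    · obtain ⟨u, hu, rfl⟩ := Finset.mem_image.1 hv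
      rw [hP_new u (Finset.mem_filter.1 hu).1]
      exact fun h => T.notMem_V u (Finset.mem_filter.1 hu).1 (Finset.mem_filter.1 hu).2
        (R.V_subset h)
  · rw [S.ext_eq, ← R.map_ext]
    exact List.map_congr_left fun v hv => hP_old (hh.2.1 v hv)
  · rcases S.mem_E_cases hc with hc | ⟨c', hc', rfl⟩
    · rw [hQ_old (Finset.mem_of_mem_erase hc)]
      exact R.notMem_E c (Finset.mem_of_mem_erase hc)
    · rw [hQ_new c' hc']
      exact hfresh c' hc'
  · rw [T.V_eq, R.V_eq, S.V_eq, Finset.image_union, Finset.image_image, Finset.union_assoc,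
      Finset.image_congr hP_old, Finset.image_congr (f := P ∘ σ) (g := ρ') fun u hu => hP_new u hu]
  · rw [T.E_eq, R.E_eq, S.E_eq, Finset.image_union, Finset.image_image,
      Finset.image_congr (hQ_old.mono fun c hc => Finset.mem_of_mem_erase hc),
      Finset.image_congr (f := Q ∘ τ) (g := η') fun c hc => hQ_new c hc, Finset.erase_union_distrib,
      Finset.erase_eq_of_notMem fun h => hd_notMem (Finset.mem_of_mem_erase h), R.image_erase hd,
      Finset.union_assoc]
  · have he'z : e' ∈ z.E.erase (η d) :=
      Finset.mem_erase.2
        ⟨fun h => hd_notMem (h ▸ Finset.mem_of_mem_erase he'), R.erase_subset_E he'⟩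
    rw [(T.old e' he'z).1, (T.old e' he'z).2]
    exact R.old e' he'
  · rcases S.mem_E_cases hc with hc | ⟨c', hc', rfl⟩
    · have hcE := Finset.mem_of_mem_erase hc
      have hcz : η c ∈ z.E.erase (η d) := Finset.mem_erase.2
        ⟨fun h => Finset.ne_of_mem_erase hc (R.injOn_E hcE hd h), R.mem_E_of_mem hcE⟩
      rw [hQ_old hcE, (T.old _ hcz).1, (T.old _ hcz).2, (R.new c hcE).1, (R.new c hcE).2,
        (S.old c hc).1, (S.old c hc).2]
      exact ⟨List.map_congr_left fun v hv => (hP_old ((hh.1 c hcE).1 v hv)).symm, rfl⟩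
    · rw [hQ_new c' hc', (T.new c' hc').1, (T.new c' hc').2, (S.new c' hc').1, (S.new c' hc').2,
        List.map_map]
      exact ⟨List.map_congr_left fun u hu => (hP_new u ((hk.1 c' hc').1 u hu)).symm, rfl⟩

theorem exists_isReplacement (hg : g.WellAttached) (hh : h.WellAttached) (he₀ : e₀ ∈ g.E)
    (hlen : h.ext.length = (g.att e₀).length) : ∃ z, IsReplacement g e₀ h z :=
  ⟨_, isReplacement_iff.2 ⟨_, _,
    replace_isReplacementVia hg hh he₀ hlen (g.below_sup.freshShift le_rfl)⟩⟩

theorem IsReplacement.exists_comp (hx : x.WellAttached) (hh : h.WellAttached)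
    (hk : k.WellAttached) (hd : d ∈ h.E) (hz : IsReplacement x e h z)
    (hh₁ : IsReplacement h d k h₁) :
    ∃ ed ∈ z.E, z.lab ed = h.lab d ∧ ∃ z₁, IsReplacement z ed k z₁ ∧ IsReplacement x e h₁ z₁ := by
  obtain ⟨ρ, η, R⟩ := isReplacement_iff.1 hz
  obtain ⟨σ, τ, S⟩ := isReplacement_iff.1 hh₁
  have hlen : k.ext.length = (z.att (η d)).length := by
    rw [(R.new d hd).1, ← S.map_ext, List.map_map, List.length_map]
  obtain ⟨N, hxN⟩ : ∃ N, x.Below N := ⟨_, x.below_sup⟩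
  obtain ⟨K, hzK⟩ : ∃ K, z.Below K := ⟨_, z.below_sup⟩
  have T := replace_isReplacementVia (N := N + K) (R.wellAttached hx hh) hk (R.mem_E_of_mem hd)
    hlen (hzK.freshShift (Nat.le_add_left K N))
  refine ⟨η d, R.mem_E_of_mem hd, (R.new d hd).2, _, isReplacement_iff.2 ⟨_, _, T⟩,
    isReplacement_iff.2 ⟨_, _, R.comp hh hk hd S T fun c _ hc => ?_⟩⟩
  have := hxN.2 _ hc
  omega

theorem IsReplacement.mem_E_of_ne (hz : IsReplacement g e₀ h z) (he : e ∈ g.E) (hne : e ≠ e₀) :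
    e ∈ z.E ∧ z.att e = g.att e ∧ z.lab e = g.lab e := by
  obtain ⟨ρ, η, R⟩ := isReplacement_iff.1 hz
  have he' := Finset.mem_erase.2 ⟨hne, he⟩
  exact ⟨R.erase_subset_E he', R.old e he'⟩

/-- Replacements of distinct edges commute. Both are realised concretely, the copy of `h₁`
shifted past `g` and that of `h₂` past both, so that the two orders of application give
literally the same graph. -/
theorem exists_isReplacement_comm (hg : g.WellAttached) (hh₁ : h₁.WellAttached)
    (hh₂ : h₂.WellAttached) (he₁ : e₁ ∈ g.E) (he₂ : e₂ ∈ g.E) (hne : e₁ ≠ e₂)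
    (hlen₁ : h₁.ext.length = (g.att e₁).length) (hlen₂ : h₂.ext.length = (g.att e₂).length) :
    ∃ c₁ c₂ w, IsReplacement g e₁ h₁ c₁ ∧ IsReplacement g e₂ h₂ c₂ ∧
      IsReplacement c₁ e₂ h₂ w ∧ IsReplacement c₂ e₁ h₁ w := by
  obtain ⟨N, hgN⟩ : ∃ N, g.Below N := ⟨_, g.below_sup⟩
  obtain ⟨K, hh₁K⟩ : ∃ K, h₁.Below K := ⟨_, h₁.below_sup⟩
  have R₁ := replace_isReplacementVia (N := N) hg hh₁ he₁ hlen₁ (hgN.freshShift le_rfl)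
  have R₂ := replace_isReplacementVia (N := N + K) hg hh₂ he₂ hlen₂
    (hgN.freshShift (Nat.le_add_right N K))
  have he₂' : e₂ ∈ g.E.erase e₁ := Finset.mem_erase.2 ⟨hne.symm, he₂⟩
  have he₁' : e₁ ∈ g.E.erase e₂ := Finset.mem_erase.2 ⟨hne, he₁⟩
  have S₁ := replace_isReplacementVia (N := N + K) (R₁.wellAttached hg hh₁) hh₂
    (R₁.erase_subset_E he₂') ((R₁.old e₂ he₂').1 ▸ hlen₂)
    (R₁.freshShift (hg.1 e₁ he₁).1 (hgN.freshShift (Nat.le_add_right N K))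
      (fun v _ u hu hux => by rw [replaceNode_of_notMem hux]; have := hh₁K.1 u hu; omega)
      fun c _ d hd => by have := hh₁K.2 d hd; omega)
  have S₂ := replace_isReplacementVia (N := N) (R₂.wellAttached hg hh₂) hh₁
    (R₂.erase_subset_E he₁') ((R₂.old e₁ he₁').1 ▸ hlen₁)
    (R₂.freshShift (hg.1 e₂ he₂).1 (hgN.freshShift le_rfl)
      (fun v hv u _ hux => by rw [replaceNode_of_notMem hux]; have := hh₁K.1 v hv; omega)
      fun c hc d _ => by have := hh₁K.2 c hc; omega)
  have hcomm : (g.replace e₁ h₁ N).replace e₂ h₂ (N + K) =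
      (g.replace e₂ h₂ (N + K)).replace e₁ h₁ N := by
    refine replace_comm ?_ ?_ (Finset.disjoint_left.2 fun x hx₁ hx₂ => ?_)
    all_goals simp only [Finset.mem_image, not_exists, not_and] at *
    · intro d _; have := hgN.2 e₁ he₁; omega
    · intro d _; have := hgN.2 e₂ he₂; omega
    · obtain ⟨c, hc, rfl⟩ := hx₁
      obtain ⟨d, -, hcd⟩ := hx₂
      have := hh₁K.2 c hc; omega
  exact ⟨_, _, _, isReplacement_iff.2 ⟨_, _, R₁⟩, isReplacement_iff.2 ⟨_, _, R₂⟩,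
    isReplacement_iff.2 ⟨_, _, S₁⟩, hcomm ▸ isReplacement_iff.2 ⟨_, _, S₂⟩⟩

end Replacement

namespace HRGrammar

variable {T : Type} {rkT : T → ℕ} {G G' : HRGrammar T}
  {g g₁ g₂ x y z z₁ z₂ t₁ t₂ : HRHypergraph (T ⊕ ℕ)} {A B C B₁ B₂ e e₁ e₂ : ℕ} {ℓ : T ⊕ ℕ}

theorem Terminal.of_isomorphic {h : HRHypergraph (T ⊕ ℕ)} (ht : Terminal g)
    (hgh : g.Isomorphic h) : Terminal h := by
  obtain ⟨f, fe, I⟩ := isomorphic_iff.1 hgh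
  intro x hx
  obtain ⟨e, he, rfl⟩ := I.bijOn_E.surjOn hx
  exact I.lab e he ▸ ht e he

theorem Terminal.not_derive (ht : Terminal g) : ¬ G.Derive g z := by
  rintro ⟨e, he, B, -, hlab, -⟩
  obtain ⟨a, ha⟩ := ht e he
  exact Sum.inl_ne_inr (ha.symm.trans hlab)

/-- The invariant of derivations. -/
def WFGraph (G : HRGrammar T) (rkT : T → ℕ) (g : HRHypergraph (T ⊕ ℕ)) : Prop :=
  g.WF (G.rk rkT) ∧ ∀ e ∈ g.E, ∀ B : ℕ, g.lab e = Sum.inr B → B ∈ G.NT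

theorem WF.wfGraph_S (hWF : G.WF rkT) : G.WFGraph rkT G.S :=
  ⟨hWF.2.2.1, hWF.2.2.2.2.1⟩

theorem WF.wfGraph_rhs (hWF : G.WF rkT) (hB : B ∈ G.NT) : G.WFGraph rkT (G.rhs B) :=
  ⟨(hWF.2.2.2.1 B hB).1, hWF.2.2.2.2.2 B hB⟩

theorem WF.length_ext_rhs (hWF : G.WF rkT) (hB : B ∈ G.NT) : (G.rhs B).ext.length = G.rkN B :=
  (hWF.2.2.2.1 B hB).2

namespace WFGraph

theorem wellAttached (hg : G.WFGraph rkT g) : g.WellAttached := hg.1.wellAttached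

theorem length_att (hg : G.WFGraph rkT g) (he : e ∈ g.E) (hlab : g.lab e = Sum.inr B) :
    (g.att e).length = G.rkN B := by
  rw [(hg.1.2.1 e he).2.2.1, hlab]
  rfl

theorem exists_derive_isReplacement (hWF : G.WF rkT) (hg : G.WFGraph rkT g) (he : e ∈ g.E)
    (hlab : g.lab e = Sum.inr B) : ∃ z, G.Derive g z ∧ IsReplacement g e (G.rhs B) z := by
  have hB := hg.2 e he B hlab
  obtain ⟨z, hz⟩ := exists_isReplacement hg.wellAttached
    (hWF.wfGraph_rhs hB).wellAttached he (by rw [hWF.length_ext_rhs hB, hg.length_att he hlab])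
  exact ⟨z, ⟨e, he, B, hB, hlab, hz⟩, hz⟩

theorem of_isReplacement (hWF : G.WF rkT) (hg : G.WFGraph rkT g) (hB : B ∈ G.NT)
    (hz : IsReplacement g e (G.rhs B) z) : G.WFGraph rkT z := by
  obtain ⟨ρ, η, R⟩ := isReplacement_iff.1 hz
  refine ⟨R.wf hg.1 (hWF.wfGraph_rhs hB).1, fun x hx C hC => ?_⟩
  rcases R.mem_E_cases hx with hx | ⟨d, hd, rfl⟩
  · exact hg.2 x (Finset.mem_of_mem_erase hx) C ((R.old x hx).2 ▸ hC)
  · exact (hWF.wfGraph_rhs hB).2 d hd C ((R.new d hd).2 ▸ hC)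

theorem derive (hWF : G.WF rkT) (hg : G.WFGraph rkT g) (h : G.Derive g z) : G.WFGraph rkT z :=
  let ⟨_, _, _, hB, _, hz⟩ := h
  hg.of_isReplacement hWF hB hz

theorem reflTransGen (hWF : G.WF rkT) (hg : G.WFGraph rkT g) (h : ReflTransGen G.Derive g z) :
    G.WFGraph rkT z := by
  induction h with
  | refl => exact hg
  | tail _ hstep ih => exact ih.derive hWF hstep

end WFGraph

theorem exists_derive_of_isomorphic (hWF : G.WF rkT) {h : HRHypergraph (T ⊕ ℕ)}
    (hg : G.WFGraph rkT g) (hgh : g.Isomorphic h) (hgz : G.Derive g z) :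
    ∃ z', G.Derive h z' ∧ z.Isomorphic z' := by
  obtain ⟨f, fe, I⟩ := isomorphic_iff.1 hgh
  obtain ⟨e, he, B, hB, hlab, hz⟩ := hgz
  have hh := I.wellAttached hg.wellAttached
  have hlen : (G.rhs B).ext.length = (h.att (fe e)).length := by
    rw [I.att e he, List.length_map, hg.length_att he hlab, hWF.length_ext_rhs hB]
  obtain ⟨z', hz'⟩ := exists_isReplacement hh (hWF.wfGraph_rhs hB).wellAttached
    (I.bijOn_E.mapsTo he) hlen
  exact ⟨z', ⟨fe e, I.bijOn_E.mapsTo he, B, hB, (I.lab e he).trans hlab, hz'⟩,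
    hz.isomorphic hg.wellAttached (hWF.wfGraph_rhs hB).wellAttached I he hz'⟩

theorem exists_reflTransGen_of_isomorphic (hWF : G.WF rkT) {h : HRHypergraph (T ⊕ ℕ)}
    (hg : G.WFGraph rkT g) (hgh : g.Isomorphic h) (hgz : ReflTransGen G.Derive g z) :
    ∃ z', ReflTransGen G.Derive h z' ∧ z.Isomorphic z' := by
  induction hgz with
  | refl => exact ⟨h, .refl, hgh⟩
  | @tail c u hgc hcu ih =>
    obtain ⟨c', hc', hcc'⟩ := ih
    obtain ⟨u', hcu', huu'⟩ := exists_derive_of_isomorphic hWF (hg.reflTransGen hWF hgc) hcc' hcu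
    exact ⟨u', hc'.tail hcu', huu'⟩

noncomputable def height (G : HRGrammar T) (B : ℕ) : ℕ :=
  (G.NT.filter fun C => TransGen G.dep B C).card

theorem height_lt (hacyc : ∀ A : ℕ, ¬ TransGen G.dep A A) (hdep : G.dep B C) :
    G.height C < G.height B := by
  refine Finset.card_lt_card ((Finset.ssubset_iff_of_subset fun D hD => ?_).2 ⟨C, ?_, ?_⟩)
  · rw [Finset.mem_filter] at hD ⊢
    exact ⟨hD.1, hD.2.head hdep⟩
  · exact Finset.mem_filter.2 ⟨hdep.2.1, .single hdep⟩
  · exact fun hC => hacyc C (Finset.mem_filter.1 hC).2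

/-- A `B`-edge outweighs all edges of `rhs B` together (`weight_rhs_lt`), so every derivation
step decreases the total weight. -/
noncomputable def labWeight (G : HRGrammar T) : T ⊕ ℕ → ℕ :=
  Sum.elim (fun _ => 0) fun B => (∑ C ∈ G.NT, (G.rhs C).E.card + 1) ^ (G.height B + 1)

noncomputable def weight (G : HRGrammar T) (g : HRHypergraph (T ⊕ ℕ)) : ℕ :=
  ∑ x ∈ g.E, G.labWeight (g.lab x)

theorem weight_rhs_lt (hWF : G.WF rkT) (hacyc : ∀ A : ℕ, ¬ TransGen G.dep A A)
    (hB : B ∈ G.NT) : G.weight (G.rhs B) < G.labWeight (.inr B) := by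
  set M := ∑ C ∈ G.NT, (G.rhs C).E.card
  have hterm : ∀ d ∈ (G.rhs B).E, G.labWeight ((G.rhs B).lab d) ≤ (M + 1) ^ G.height B := by
    intro d hd
    rcases hl : (G.rhs B).lab d with a | C
    · exact Nat.zero_le _
    · exact Nat.pow_le_pow_right (Nat.succ_pos M)
        (G.height_lt hacyc ⟨hB, (hWF.wfGraph_rhs hB).2 d hd C hl, d, hd, hl⟩)
  have hcard : (G.rhs B).E.card ≤ M :=
    Finset.single_le_sum (f := fun C => (G.rhs C).E.card) (fun _ _ => Nat.zero_le _) hB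
  calc G.weight (G.rhs B) ≤ (G.rhs B).E.card * (M + 1) ^ G.height B := by
        rw [weight, ← smul_eq_mul]
        exact Finset.sum_le_card_nsmul _ _ _ hterm
    _ ≤ M * (M + 1) ^ G.height B := Nat.mul_le_mul_right _ hcard
    _ < (M + 1) * (M + 1) ^ G.height B :=
        Nat.mul_lt_mul_of_pos_right (Nat.lt_succ_self M) (pow_pos (Nat.succ_pos M) _)
    _ = G.labWeight (.inr B) := by rw [labWeight, Sum.elim_inr, pow_succ']

theorem weight_lt_of_isReplacement (hWF : G.WF rkT) (hacyc : ∀ A : ℕ, ¬ TransGen G.dep A A)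
    (he : e ∈ g.E) (hlab : g.lab e = .inr B) (hB : B ∈ G.NT)
    (hz : IsReplacement g e (G.rhs B) z) : G.weight z < G.weight g := by
  obtain ⟨ρ, η, R⟩ := isReplacement_iff.1 hz
  have hsum := R.sum_E fun _ ℓ => G.labWeight ℓ
  have hsplit := Finset.sum_erase_add g.E (fun x => G.labWeight (g.lab x)) he
  have hrhs := weight_rhs_lt hWF hacyc hB
  rw [hlab] at hsplit
  unfold weight at *
  omega

theorem Derive.weight_lt (hWF : G.WF rkT) (hacyc : ∀ A : ℕ, ¬ TransGen G.dep A A)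
    (h : G.Derive g z) : G.weight z < G.weight g :=
  let ⟨_, he, _, hB, hlab, hz⟩ := h
  weight_lt_of_isReplacement hWF hacyc he hlab hB hz

theorem exists_terminal (hWF : G.WF rkT) (hacyc : ∀ A : ℕ, ¬ TransGen G.dep A A)
    (hg : G.WFGraph rkT g) : ∃ t, ReflTransGen G.Derive g t ∧ Terminal t := by
  induction hn : G.weight g using Nat.strong_induction_on generalizing g with
  | _ n ih =>
    by_cases ht : Terminal g
    · exact ⟨g, .refl, ht⟩
    simp only [Terminal, not_forall] at ht
    obtain ⟨e, he, hne⟩ := ht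
    rcases hl : g.lab e with a | B
    · exact absurd ⟨a, hl⟩ hne
    obtain ⟨z, hgz, -⟩ := hg.exists_derive_isReplacement hWF he hl
    obtain ⟨t, hzt, ht⟩ := ih _ (hn ▸ hgz.weight_lt hWF hacyc) (hg.derive hWF hgz) rfl
    exact ⟨t, .head hgz hzt, ht⟩

theorem exists_derive_isomorphic_of_ne (hWF : G.WF rkT) (hg : G.WFGraph rkT g)
    (he₁ : e₁ ∈ g.E) (hl₁ : g.lab e₁ = .inr B₁) (hz₁ : IsReplacement g e₁ (G.rhs B₁) z₁)
    (he₂ : e₂ ∈ g.E) (hl₂ : g.lab e₂ = .inr B₂) (hz₂ : IsReplacement g e₂ (G.rhs B₂) z₂)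
    (hne : e₁ ≠ e₂) : ∃ w₁ w₂, G.Derive z₁ w₁ ∧ G.Derive z₂ w₂ ∧ w₁.Isomorphic w₂ := by
  have hB₁ := hg.2 e₁ he₁ B₁ hl₁
  have hB₂ := hg.2 e₂ he₂ B₂ hl₂
  obtain ⟨c₁, c₂, w, hc₁, hc₂, hc₁w, hc₂w⟩ := exists_isReplacement_comm hg.wellAttached
    (hWF.wfGraph_rhs hB₁).wellAttached (hWF.wfGraph_rhs hB₂).wellAttached he₁ he₂ hne
    (by rw [hWF.length_ext_rhs hB₁, hg.length_att he₁ hl₁])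
    (by rw [hWF.length_ext_rhs hB₂, hg.length_att he₂ hl₂])
  have hgc₁ := hg.of_isReplacement hWF hB₁ hc₁
  have hgc₂ := hg.of_isReplacement hWF hB₂ hc₂
  obtain ⟨he₂c₁, -, hl₂c₁⟩ := hc₁.mem_E_of_ne he₂ hne.symm
  obtain ⟨he₁c₂, -, hl₁c₂⟩ := hc₂.mem_E_of_ne he₁ hne
  have hdw₁ : G.Derive c₁ w := ⟨e₂, he₂c₁, B₂, hB₂, hl₂c₁.trans hl₂, hc₁w⟩
  have hdw₂ : G.Derive c₂ w := ⟨e₁, he₁c₂, B₁, hB₁, hl₁c₂.trans hl₁, hc₂w⟩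
  obtain ⟨w₁, hw₁, hww₁⟩ := exists_derive_of_isomorphic hWF hgc₁
    (hc₁.isomorphic_of_isReplacement hg.wellAttached (hWF.wfGraph_rhs hB₁).wellAttached he₁ hz₁)
    hdw₁
  obtain ⟨w₂, hw₂, hww₂⟩ := exists_derive_of_isomorphic hWF hgc₂
    (hc₂.isomorphic_of_isReplacement hg.wellAttached (hWF.wfGraph_rhs hB₂).wellAttached he₂ hz₂)
    hdw₂
  exact ⟨w₁, w₂, hw₁, hw₂, (hww₁.symm (hgc₁.derive hWF hdw₁).wellAttached).trans hww₂⟩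

theorem Derive.exists_isomorphic (hWF : G.WF rkT) (hg : G.WFGraph rkT g) (h₁ : G.Derive g g₁)
    (h₂ : G.Derive g g₂) : ∃ w₁ w₂, ReflTransGen G.Derive g₁ w₁ ∧ ReflTransGen G.Derive g₂ w₂ ∧
      w₁.Isomorphic w₂ := by
  obtain ⟨e₁, he₁, B₁, hB₁, hl₁, hz₁⟩ := h₁
  obtain ⟨e₂, he₂, B₂, -, hl₂, hz₂⟩ := h₂
  by_cases hne : e₁ = e₂
  · subst hne
    obtain rfl : B₁ = B₂ := Sum.inr.inj (hl₁.symm.trans hl₂)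
    exact ⟨g₁, g₂, .refl, .refl, hz₁.isomorphic_of_isReplacement hg.wellAttached
      (hWF.wfGraph_rhs hB₁).wellAttached he₁ hz₂⟩
  · obtain ⟨w₁, w₂, hw₁, hw₂, hw⟩ :=
      exists_derive_isomorphic_of_ne hWF hg he₁ hl₁ hz₁ he₂ hl₂ hz₂ hne
    exact ⟨w₁, w₂, .single hw₁, .single hw₂, hw⟩

/-- Newman's lemma up to isomorphism: derivations terminate and are locally confluent. -/
theorem isomorphic_of_terminal (hWF : G.WF rkT) (hacyc : ∀ A : ℕ, ¬ TransGen G.dep A A)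
    (hg : G.WFGraph rkT g) (h₁ : ReflTransGen G.Derive g t₁) (ht₁ : Terminal t₁)
    (h₂ : ReflTransGen G.Derive g t₂) (ht₂ : Terminal t₂) : t₁.Isomorphic t₂ := by
  induction hn : G.weight g using Nat.strong_induction_on generalizing g t₁ t₂ with
  | _ n ih =>
  rcases h₁.cases_head with rfl | ⟨g₁, hgg₁, hg₁t₁⟩
  · rcases h₂.cases_head with rfl | ⟨g₂, hgg₂, -⟩
    · exact .refl _
    · exact (ht₁.not_derive hgg₂).elim
  rcases h₂.cases_head with rfl | ⟨g₂, hgg₂, hg₂t₂⟩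
  · exact (ht₂.not_derive hgg₁).elim
  have hg₁ := hg.derive hWF hgg₁
  have hg₂ := hg.derive hWF hgg₂
  obtain ⟨w₁, w₂, hw₁, hw₂, hw⟩ := hgg₁.exists_isomorphic hWF hg hgg₂
  obtain ⟨t, hw₁t, ht⟩ := exists_terminal hWF hacyc (hg₁.reflTransGen hWF hw₁)
  obtain ⟨t', hw₂t', htt'⟩ :=
    exists_reflTransGen_of_isomorphic hWF (hg₁.reflTransGen hWF hw₁) hw hw₁t
  have h₁t := ih _ (hn ▸ hgg₁.weight_lt hWF hacyc) hg₁ hg₁t₁ ht₁ (hw₁.trans hw₁t) ht rfl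
  have h₂t' := ih _ (hn ▸ hgg₂.weight_lt hWF hacyc) hg₂ hg₂t₂ ht₂ (hw₂.trans hw₂t')
    (ht.of_isomorphic htt') rfl
  exact (h₁t.trans htt').trans (h₂t'.symm (hg₂.reflTransGen hWF hg₂t₂).wellAttached)

theorem not_hasLabel_rhs_self (hacyc : ∀ A : ℕ, ¬ TransGen G.dep A A) (hA : A ∈ G.NT) :
    ¬ (G.rhs A).HasLabel (.inr A) :=
  fun h => hacyc A (.single ⟨hA, hA, h⟩)

namespace ElimStep

theorem derive (hA : A ∈ G.NT) (h : G.ElimStep A x y) : G.Derive x y :=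
  let ⟨e, he, hlab, hz⟩ := h
  ⟨e, he, A, hA, hlab, hz⟩

theorem ext_eq (h : G.ElimStep A x y) : y.ext = x.ext := by
  obtain ⟨e, -, -, hz⟩ := h
  obtain ⟨ρ, η, R⟩ := isReplacement_iff.1 hz
  exact R.ext_eq

theorem hasLabel (h : G.ElimStep A x y) (hℓ : ℓ ≠ .inr A) (hx : x.HasLabel ℓ) : y.HasLabel ℓ := by
  obtain ⟨e₀, -, hlab, hz⟩ := h
  obtain ⟨e, he, rfl⟩ := hx
  obtain ⟨hey, -, hl⟩ := hz.mem_E_of_ne he fun h => hℓ (h ▸ hlab)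
  exact ⟨e, hey, hl⟩

theorem hasLabel_of_rhs (h : G.ElimStep A x y) (hℓ : (G.rhs A).HasLabel ℓ) : y.HasLabel ℓ := by
  obtain ⟨e₀, -, -, hz⟩ := h
  obtain ⟨ρ, η, R⟩ := isReplacement_iff.1 hz
  obtain ⟨d, hd, rfl⟩ := hℓ
  exact ⟨η d, R.mem_E_of_mem hd, (R.new d hd).2⟩

theorem hasLabel_cases (h : G.ElimStep A x y) (hy : y.HasLabel ℓ) :
    x.HasLabel ℓ ∨ (G.rhs A).HasLabel ℓ := by
  obtain ⟨e₀, -, -, hz⟩ := h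
  obtain ⟨ρ, η, R⟩ := isReplacement_iff.1 hz
  obtain ⟨e, he, rfl⟩ := hy
  rcases R.mem_E_cases he with he | ⟨d, hd, rfl⟩
  · exact .inl ⟨e, Finset.mem_of_mem_erase he, (R.old e he).2.symm⟩
  · exact .inr ⟨d, hd, (R.new d hd).2.symm⟩

end ElimStep

theorem reflTransGen_derive_of_elimStep (hA : A ∈ G.NT) (h : ReflTransGen (G.ElimStep A) x y) :
    ReflTransGen G.Derive x y :=
  ReflTransGen.mono (fun _ _ => ElimStep.derive hA) _ _ h

theorem ext_eq_of_reflTransGen (h : ReflTransGen (G.ElimStep A) x y) : y.ext = x.ext := by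
  induction h with
  | refl => rfl
  | tail _ hstep ih => exact hstep.ext_eq.trans ih

theorem hasLabel_of_reflTransGen (h : ReflTransGen (G.ElimStep A) x y) (hℓ : ℓ ≠ .inr A)
    (hx : x.HasLabel ℓ) : y.HasLabel ℓ := by
  induction h with
  | refl => exact hx
  | tail _ hstep ih => exact hstep.hasLabel hℓ ih

theorem hasLabel_cases_of_reflTransGen (hnoA : ¬ (G.rhs A).HasLabel (.inr A))
    (h : ReflTransGen (G.ElimStep A) x y) (hy : y.HasLabel ℓ) :
    x.HasLabel ℓ ∨ (x.HasLabel (.inr A) ∧ (G.rhs A).HasLabel ℓ) := by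
  induction h generalizing ℓ with
  | refl => exact .inl hy
  | @tail y' y _ hstep ih =>
    rcases hstep.hasLabel_cases hy with hy' | hrhs
    · exact ih hy'
    · obtain ⟨e, he, hlab, -⟩ := hstep
      rcases ih ⟨e, he, hlab⟩ with hxA | ⟨-, hrhsA⟩
      · exact .inr ⟨hxA, hrhs⟩
      · exact (hnoA hrhsA).elim

theorem ElimAll.hasLabel_of_rhs (hnoA : ¬ (G.rhs A).HasLabel (.inr A)) (h : G.ElimAll A x y)
    (hx : x.HasLabel (.inr A)) (hℓ : (G.rhs A).HasLabel ℓ) : y.HasLabel ℓ := by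
  rcases h.1.cases_head with rfl | ⟨z, hxz, hzy⟩
  · obtain ⟨e, he, hlab⟩ := hx
    exact (h.2 e he hlab).elim
  · exact hasLabel_of_reflTransGen hzy (fun h => hnoA (h ▸ hℓ)) (hxz.hasLabel_of_rhs hℓ)

theorem ElimStep.size_add (hWF : G.WF rkT) (hA : A ∈ G.NT) (hx : G.WFGraph rkT x)
    (h : G.ElimStep A x y) : y.size + G.handleSize A = x.size + (G.rhs A).size := by
  obtain ⟨e, he, hlab, hz⟩ := h
  obtain ⟨ρ, η, R⟩ := isReplacement_iff.1 hz
  have hrhs := (hWF.wfGraph_rhs hA).wellAttached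
  have hE := R.esize_add he
  have hV := R.card_V_add (hx.wellAttached.1 e he).1 hrhs.2.1 hrhs.2.2
  rw [hx.length_att he hlab] at hE
  rw [hWF.length_ext_rhs hA] at hV
  simp only [HRHypergraph.size, handleSize]
  split_ifs at hE ⊢ <;> omega

theorem ElimStep.labelCount_add (hnoA : ¬ (G.rhs A).HasLabel (.inr A)) (h : G.ElimStep A x y) :
    y.labelCount (.inr A) + 1 = x.labelCount (.inr A) := by
  obtain ⟨e, he, hlab, hz⟩ := h
  obtain ⟨ρ, η, R⟩ := isReplacement_iff.1 hz
  have := R.labelCount_add he (.inr A)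
  rwa [if_pos hlab, labelCount_eq_zero.2 hnoA, add_zero] at this

/-- Each elimination step adds `|rhs(A)| - |handle(A)|` to the size and removes one `A`-edge. -/
theorem size_add_labelCount_mul_eq (hWF : G.WF rkT) (hA : A ∈ G.NT)
    (hacyc : ∀ A : ℕ, ¬ TransGen G.dep A A) (hx : G.WFGraph rkT x)
    (h : ReflTransGen (G.ElimStep A) x y) :
    (y.size : ℤ) + y.labelCount (.inr A) * ((G.rhs A).size - G.handleSize A) =
      x.size + x.labelCount (.inr A) * ((G.rhs A).size - G.handleSize A) := by
  induction h with
  | refl => rfl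
  | @tail y' y hxy' hstep ih =>
    have hy' := hx.reflTransGen hWF (reflTransGen_derive_of_elimStep hA hxy')
    have hsize : (y.size : ℤ) + G.handleSize A = y'.size + (G.rhs A).size := by
      exact_mod_cast hstep.size_add hWF hA hy'
    have hcount := hstep.labelCount_add (not_hasLabel_rhs_self hacyc hA)
    rw [← ih, ← hcount]
    push_cast
    linear_combination hsize

theorem ElimAll.size_eq (hWF : G.WF rkT) (hA : A ∈ G.NT) (hacyc : ∀ A : ℕ, ¬ TransGen G.dep A A)
    (hx : G.WFGraph rkT x) (h : G.ElimAll A x y) :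
    (y.size : ℤ) = x.size + x.labelCount (.inr A) * ((G.rhs A).size - G.handleSize A) := by
  have := size_add_labelCount_mul_eq hWF hA hacyc hx h.1
  rwa [labelCount_eq_zero.2 fun ⟨e, he, hl⟩ => h.2 e he hl, Nat.cast_zero, zero_mul,
    add_zero] at this

theorem exists_derive_isReplacement_of_elimStep (hWF : G.WF rkT) (hA : A ∈ G.NT)
    {c h h' z : HRHypergraph (T ⊕ ℕ)} {e : ℕ} (hc : c.WellAttached) (hh : G.WFGraph rkT h)
    (hhh' : ReflTransGen (G.ElimStep A) h h') (hz : IsReplacement c e h z) :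
    ∃ y, ReflTransGen G.Derive z y ∧ IsReplacement c e h' y := by
  induction hhh' with
  | refl => exact ⟨z, .refl, hz⟩
  | @tail h₁ h₂ hhh₁ hstep ih =>
    obtain ⟨y, hzy, hy⟩ := ih
    obtain ⟨d, hd, hlab, hh₂⟩ := hstep
    obtain ⟨ed, hed, hled, z₁, hyz₁, hcz₁⟩ := hy.exists_comp hc
      (hh.reflTransGen hWF (reflTransGen_derive_of_elimStep hA hhh₁)).wellAttached
      (hWF.wfGraph_rhs hA).wellAttached hd hh₂
    exact ⟨z₁, hzy.tail ⟨ed, hed, A, hA, hled.trans hlab, hyz₁⟩, hcz₁⟩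

/-- `G'` arises from `G` by applying the rule of `A` to every `A`-edge of the start graph and of
the other right-hand sides, and dropping `A`. -/
structure IsElimination (G : HRGrammar T) (A : ℕ) (G' : HRGrammar T) : Prop where
  NT_eq : G'.NT = G.NT.erase A
  rkN_eq : ∀ B ∈ G'.NT, G'.rkN B = G.rkN B
  elimAll_S : G.ElimAll A G.S G'.S
  elimAll_rhs : ∀ B ∈ G'.NT, G.ElimAll A (G.rhs B) (G'.rhs B)

namespace IsElimination

variable (E : G.IsElimination A G')
include E

theorem NT_subset : G'.NT ⊆ G.NT := E.NT_eq ▸ Finset.erase_subset A G.NT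

theorem ne_of_mem (hB : B ∈ G'.NT) : B ≠ A := (Finset.mem_erase.1 (E.NT_eq ▸ hB)).1

theorem mem_of_mem (hB : B ∈ G.NT) (hne : B ≠ A) : B ∈ G'.NT :=
  E.NT_eq ▸ Finset.mem_erase.2 ⟨hne, hB⟩

theorem rk_lab_eq (hg : ∀ e ∈ g.E, ∀ B, g.lab e = .inr B → B ∈ G'.NT) (e : ℕ) (he : e ∈ g.E) :
    G'.rk rkT (g.lab e) = G.rk rkT (g.lab e) := by
  rcases hl : g.lab e with a | B
  · rfl
  · exact E.rkN_eq B (hg e he B hl)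

theorem wfGraph'_of_wfGraph (hg : G.WFGraph rkT g) (hno : ¬ g.HasLabel (.inr A)) :
    G'.WFGraph rkT g := by
  have hlab : ∀ e ∈ g.E, ∀ B, g.lab e = .inr B → B ∈ G'.NT := fun e he B hB =>
    E.mem_of_mem (hg.2 e he B hB) fun h => hno ⟨e, he, h ▸ hB⟩
  exact ⟨hg.1.of_rk_eq (E.rk_lab_eq hlab), hlab⟩

theorem wfGraph_of_wfGraph' (hg : G'.WFGraph rkT g) : G.WFGraph rkT g :=
  ⟨hg.1.of_rk_eq fun e he => (E.rk_lab_eq hg.2 e he).symm,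
    fun e he B hB => E.NT_subset (hg.2 e he B hB)⟩

theorem wfGraph_S' (hWF : G.WF rkT) (hA : A ∈ G.NT) : G.WFGraph rkT G'.S :=
  hWF.wfGraph_S.reflTransGen hWF (reflTransGen_derive_of_elimStep hA E.elimAll_S.1)

theorem wfGraph_rhs' (hWF : G.WF rkT) (hA : A ∈ G.NT) (hB : B ∈ G'.NT) :
    G.WFGraph rkT (G'.rhs B) :=
  (hWF.wfGraph_rhs (E.NT_subset hB)).reflTransGen hWF
    (reflTransGen_derive_of_elimStep hA (E.elimAll_rhs B hB).1)

theorem wf (hWF : G.WF rkT) (hA : A ∈ G.NT) : G'.WF rkT := by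
  have hS := E.wfGraph'_of_wfGraph (E.wfGraph_S' hWF hA) fun ⟨e, he, hl⟩ => E.elimAll_S.2 e he hl
  have hrhs : ∀ B ∈ G'.NT, G'.WFGraph rkT (G'.rhs B) := fun B hB =>
    E.wfGraph'_of_wfGraph (E.wfGraph_rhs' hWF hA hB) fun ⟨e, he, hl⟩ =>
      (E.elimAll_rhs B hB).2 e he hl
  refine ⟨hWF.1, fun B hB => E.rkN_eq B hB ▸ hWF.2.1 B (E.NT_subset hB), hS.1,
    fun B hB => ⟨(hrhs B hB).1, ?_⟩, hS.2, fun B hB => (hrhs B hB).2⟩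
  rw [ext_eq_of_reflTransGen (E.elimAll_rhs B hB).1, E.rkN_eq B hB]
  exact hWF.length_ext_rhs (E.NT_subset hB)

theorem dep_of_dep (hB : B ≠ A) (hC : C ≠ A) (h : G.dep B C) : G'.dep B C := by
  obtain ⟨hB', hC', hl⟩ := h
  have hB'' := E.mem_of_mem hB' hB
  exact ⟨hB'', E.mem_of_mem hC' hC,
    hasLabel_of_reflTransGen (E.elimAll_rhs B hB'').1 (fun h => hC (Sum.inr.inj h)) hl⟩

theorem dep_of_dep_dep (hnoA : ¬ (G.rhs A).HasLabel (.inr A)) (hB : B ≠ A) (hC : C ≠ A)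
    (hBA : G.dep B A) (hAC : G.dep A C) : G'.dep B C := by
  have hB' := E.mem_of_mem hBA.1 hB
  exact ⟨hB', E.mem_of_mem hAC.2.1 hC,
    (E.elimAll_rhs B hB').hasLabel_of_rhs hnoA hBA.2.2 hAC.2.2⟩

theorem transGen_dep_of_dep (hA : A ∈ G.NT) (hnoA : ¬ (G.rhs A).HasLabel (.inr A))
    (h : G'.dep B C) : TransGen G.dep B C := by
  obtain ⟨hB, hC, hl⟩ := h
  rcases hasLabel_cases_of_reflTransGen hnoA (E.elimAll_rhs B hB).1 hl with hl | ⟨hBA, hAC⟩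
  · exact .single ⟨E.NT_subset hB, E.NT_subset hC, hl⟩
  · exact .head ⟨E.NT_subset hB, hA, hBA⟩ (.single ⟨hA, E.NT_subset hC, hAC⟩)

theorem sl (hSL : G.SL) (hA : A ∈ G.NT) : G'.SL := by
  have hnoA := not_hasLabel_rhs_self hSL.1 hA
  have hdep : TransGen G'.dep ≤ TransGen G.dep :=
    TransGen.closed fun _ _ => E.transGen_dep_of_dep hA hnoA
  refine ⟨fun B hB => hSL.1 B (hdep _ _ hB), fun B hB => ?_⟩
  obtain ⟨C, hSC, hCB⟩ := hSL.2 B (E.NT_subset hB)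
  have hpath := hCB.of_bypass (fun _ _ => E.dep_of_dep) (fun _ _ => E.dep_of_dep_dep hnoA)
    (fun h => hSL.1 A (.single h)) (E.ne_of_mem hB)
  by_cases hC : C = A
  · obtain ⟨D, hAD, hDB⟩ := hpath.2 hC
    exact ⟨D, E.elimAll_S.hasLabel_of_rhs hnoA (hC ▸ hSC) hAD.2.2, hDB⟩
  · exact ⟨C, hasLabel_of_reflTransGen E.elimAll_S.1 (fun h => hC (Sum.inr.inj h)) hSC,
      hpath.1 hC⟩

theorem exists_reflTransGen_isomorphic_of_derive (hWF : G.WF rkT) (hA : A ∈ G.NT)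
    {c u : HRHypergraph (T ⊕ ℕ)} (hc : G'.WFGraph rkT c) (hcu : G'.Derive c u) :
    ∃ y, ReflTransGen G.Derive c y ∧ y.Isomorphic u := by
  obtain ⟨e, he, B, hB, hlab, hu⟩ := hcu
  have hcG := E.wfGraph_of_wfGraph' hc
  obtain ⟨z, hcz, hz⟩ := hcG.exists_derive_isReplacement hWF he hlab
  obtain ⟨y, hzy, hy⟩ := exists_derive_isReplacement_of_elimStep hWF hA hcG.wellAttached
    (hWF.wfGraph_rhs (E.NT_subset hB)) (E.elimAll_rhs B hB).1 hz
  exact ⟨y, .head hcz hzy,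
    hy.isomorphic_of_isReplacement hcG.wellAttached (E.wfGraph_rhs' hWF hA hB).wellAttached he hu⟩

theorem exists_reflTransGen_isomorphic (hWF : G.WF rkT) (hA : A ∈ G.NT)
    {g' : HRHypergraph (T ⊕ ℕ)} (hg' : ReflTransGen G'.Derive G'.S g') :
    ∃ t, ReflTransGen G.Derive G.S t ∧ G.WFGraph rkT t ∧ t.Isomorphic g' := by
  induction hg' with
  | refl =>
    exact ⟨G'.S, reflTransGen_derive_of_elimStep hA E.elimAll_S.1, E.wfGraph_S' hWF hA, .refl _⟩
  | @tail c u hc hcu ih =>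
    obtain ⟨t, hSt, ht, htc⟩ := ih
    have hWF' := E.wf hWF hA
    have hc' := hWF'.wfGraph_S.reflTransGen hWF' hc
    have hcG := E.wfGraph_of_wfGraph' hc'
    obtain ⟨y, hcy, hyu⟩ := E.exists_reflTransGen_isomorphic_of_derive hWF hA hc' hcu
    obtain ⟨y', hty', hyy'⟩ :=
      exists_reflTransGen_of_isomorphic hWF hcG (htc.symm ht.wellAttached) hcy
    exact ⟨y', hSt.trans hty', ht.reflTransGen hWF hty',
      (hyy'.symm (hcG.reflTransGen hWF hcy).wellAttached).trans hyu⟩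

theorem isomorphic_of_mem_lang (hWF : G.WF rkT) (hacyc : ∀ A : ℕ, ¬ TransGen G.dep A A)
    (hA : A ∈ G.NT) {g g' : HRHypergraph (T ⊕ ℕ)} (hg : g ∈ G.Lang) (hg' : g' ∈ G'.Lang) :
    g.Isomorphic g' := by
  obtain ⟨t, hSt, ht, htg'⟩ := E.exists_reflTransGen_isomorphic hWF hA hg'.1
  have htT : Terminal t := hg'.2.of_isomorphic (htg'.symm ht.wellAttached)
  exact (isomorphic_of_terminal hWF hacyc hWF.wfGraph_S hg.1 hg.2 hSt htT).trans htg'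

theorem size_eq (hWF : G.WF rkT) (hacyc : ∀ A : ℕ, ¬ TransGen G.dep A A) (hA : A ∈ G.NT) :
    (G'.size : ℤ) = G.size + G.con A := by
  set Δ : ℤ := (G.rhs A).size - G.handleSize A
  have hS := E.elimAll_S.size_eq hWF hA hacyc hWF.wfGraph_S
  have hrhs : ∀ B ∈ G'.NT, ((G'.rhs B).size : ℤ) =
      (G.rhs B).size + (G.rhs B).labelCount (.inr A) * Δ := fun B hB =>
    (E.elimAll_rhs B hB).size_eq hWF hA hacyc (hWF.wfGraph_rhs (E.NT_subset hB))
  have hcA : (G.rhs A).labelCount (.inr A) = 0 :=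
    labelCount_eq_zero.2 (not_hasLabel_rhs_self hacyc hA)
  have href : (G.refCount A : ℤ) =
      G.S.labelCount (.inr A) + ∑ B ∈ G'.NT, ((G.rhs B).labelCount (.inr A) : ℤ) := by
    have : G.refCount A =
        G.S.labelCount (.inr A) + ∑ B ∈ G.NT, (G.rhs B).labelCount (.inr A) := by
      simp only [refCount, labelCount]
      convert rfl
    rw [E.NT_eq, this, ← Finset.sum_erase_add _ _ hA, hcA]
    push_cast
    ring
  have hsize :
      (G.size : ℤ) = G.S.size + ∑ B ∈ G'.NT, ((G.rhs B).size : ℤ) + (G.rhs A).size := by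
    rw [E.NT_eq, size, ← Finset.sum_erase_add _ _ hA]
    push_cast
    ring
  rw [size, con, href, hsize]
  push_cast
  rw [hS, Finset.sum_congr rfl hrhs, Finset.sum_add_distrib, ← Finset.sum_mul]
  ring

end IsElimination

end HRGrammar

/-- Let `G` be an SL-HR grammar and `A` a nonterminal, and
let `G'` be obtained from `G` by replacing every `A`-labeled edge in the
start graph and in the right-hand sides of the other rules by `rhs(A)` and
removing `A` together with its rule.  Then `G'` is an SL-HR grammar with
`val(G')` isomorphic to `val(G)` and `|G'| = |G| + con(A)`. -/
theorem eliminate_nonterminal_size_change {T : Type} (rkT : T → ℕ)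
    (G : HRGrammar T) (hWF : G.WF rkT) (hSL : G.SL) (A : ℕ) (hA : A ∈ G.NT)
    (G' : HRGrammar T)
    (hNT : G'.NT = G.NT.erase A)
    (hrk : ∀ B ∈ G'.NT, G'.rkN B = G.rkN B)
    (hS : G.ElimAll A G.S G'.S)
    (hrules : ∀ B ∈ G'.NT, G.ElimAll A (G.rhs B) (G'.rhs B)) :
    G'.WF rkT ∧ G'.SL ∧
      (∀ g ∈ G.Lang, ∀ g' ∈ G'.Lang, g.Isomorphic g') ∧
      (G'.size : ℤ) = (G.size : ℤ) + G.con A := by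
  have E : G.IsElimination A G' := ⟨hNT, hrk, hS, hrules⟩
  exact ⟨E.wf hWF hA, E.sl hSL hA,
    fun g hg g' hg' => E.isomorphic_of_mem_lang hWF hSL.1 hA hg hg', E.size_eq hWF hSL.1 hA⟩
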